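/- Let h : ℝ^d → ℝ^d be twice continuously differentiable, x* ∈ ℝ^d with h(x*) = 0, and suppose constants K̃ ≥ 1, λ' > 0 satisfy ‖exp(Dh(x*) t)‖ ≤ K̃ exp(−λ' t) for all t ≥ 0. Fix κ ∈ (0,1) and set λ = ((1−κ)/K̃²) λ'. Let V : U → ℝ be a continuously differentiable Liapunov function for x* on an open set U containing x*, i.e., V(x*) = 0 and, for all x ∈ U with x ≠ x*, V(x) > 0 and ∇V(x)·h(x) < 0. Let r > 0 be such that the sublevel set V^r := {x ∈ U : V(x) ≤ r} is compact, and let φ : [0,∞) × V^r → ℝ^d be a semiflow of the ODE ẋ = h(x), i.e., φ(0,u) = u, (d/dt)φ(t,u) = h(φ(t,u)), and φ(t,u) ∈ V^r for all u ∈ V^r and t ≥ 0. Then there exists a constant K₂ ≥ 0 such that for all u₀ ∈ V^r and all t ≥ 0: ∫₀^t ‖Dh(φ(τ,u₀)) − Dh(x*)‖ dτ ≤ K₂. -/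

import Mathlib

/-!
Write `y = φ - x*` and `A = Dh(x*)`. Then `y' = A y + g` with `‖g‖ ≤ C ‖y‖²`, and the
variation-of-constants formula together with Grönwall's inequality show that the decay
`‖exp (t A)‖ ≤ K̃ e^{-λ' t}` survives this perturbation as long as `y` stays small; a first-exit
argument shows that it does stay small once `K̃ ‖y‖` starts below a suitable `ε`. Hence after
entering the ball of radius `ε / K̃` the integrand `‖Dh(φ) - A‖ ≤ C ‖y‖` decays exponentially
and its integral is bounded. Before that, `V` decreases along trajectories at a rate bounded
away from zero on the compact set `V^r` minus this ball, so every trajectory enters the ball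
before a uniform time `T`, and up to time `T` the integrand is bounded by its maximum on `V^r`.
-/

open Set MeasureTheory Filter Topology Metric

theorem le_mul_exp_of_le_add_mul_integral {z : ℝ → ℝ} {a b c K : ℝ} (hab : a ≤ b)
    (hz : ContinuousOn z (Icc a b)) (hK : 0 ≤ K)
    (hle : ∀ s ∈ Icc a b, z s ≤ c + K * ∫ τ in a..s, z τ) :
    z b ≤ c * Real.exp (K * (b - a)) := by
  set F : ℝ → ℝ := fun s => ∫ τ in a..s, z τ
  have hF : ∀ x ∈ Ico a b, HasDerivWithinAt F (z x) (Ici x) x := fun x hx =>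
    intervalIntegral.integral_hasDerivWithinAt_right
      ((hz.mono (Icc_subset_Icc_right hx.2.le)).intervalIntegrable_of_Icc hx.1)
      ⟨Icc a b, Icc_mem_nhdsGT_of_mem hx, hz.aestronglyMeasurable measurableSet_Icc⟩
      ((hz x (Ico_subset_Icc_self hx)).mono_of_mem_nhdsWithin (Icc_mem_nhdsGT_of_mem hx))
  have hFc : ContinuousOn F (Icc a b) := (intervalIntegral.continuousOn_primitive_interval'
    (hz.intervalIntegrable_of_Icc hab) left_mem_uIcc).mono Icc_subset_uIcc
  have hFb : F b ≤ gronwallBound 0 K c (b - a) :=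
    le_gronwallBound_of_liminf_deriv_right_le hFc
      (fun x hx _ hr => (hF x hx).liminf_right_slope_le hr) (by simp [F])
      (fun x hx => (hle x (Ico_subset_Icc_self hx)).trans_eq (add_comm _ _)) b
      (right_mem_Icc.2 hab)
  have hgb : c + K * gronwallBound 0 K c (b - a) = c * Real.exp (K * (b - a)) := by
    rcases eq_or_ne K 0 with rfl | hK0
    · simp
    · rw [gronwallBound_of_K_ne_0 hK0]; field_simp; ring
  calc z b ≤ c + K * F b := hle b (right_mem_Icc.2 hab)
    _ ≤ c + K * gronwallBound 0 K c (b - a) := by gcongr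
    _ = c * Real.exp (K * (b - a)) := hgb

section Taylor

variable {E F : Type*} [NormedAddCommGroup E] [NormedSpace ℝ E]
  [NormedAddCommGroup F] [NormedSpace ℝ F] {f : E → F}

theorem ContDiff.exists_norm_fderiv_sub_le (hf : ContDiff ℝ 2 f) (p : E) :
    ∃ C ρ : ℝ, 0 ≤ C ∧ 0 < ρ ∧
      ∀ x ∈ closedBall p ρ, ‖fderiv ℝ f x - fderiv ℝ f p‖ ≤ C * ‖x - p‖ := by
  obtain ⟨C, t, ht, hlip⟩ :=
    ((hf.fderiv_right one_add_one_eq_two.le).contDiffAt (x := p)).exists_lipschitzOnWith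
  obtain ⟨ρ, hρ, hball⟩ := nhds_basis_closedBall.mem_iff.1 ht
  exact ⟨C, ρ, C.2, hρ, fun x hx =>
    (hlip.norm_sub_le (hball hx) (hball (mem_closedBall_self hρ.le)))⟩

theorem norm_sub_sub_fderiv_apply_le {p : E} {ρ C : ℝ}
    (hf : ∀ x ∈ closedBall p ρ, DifferentiableAt ℝ f x) (hC0 : 0 ≤ C)
    (hC : ∀ x ∈ closedBall p ρ, ‖fderiv ℝ f x - fderiv ℝ f p‖ ≤ C * ‖x - p‖)
    {x : E} (hx : x ∈ closedBall p ρ) :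
    ‖f x - f p - fderiv ℝ f p (x - p)‖ ≤ C * ‖x - p‖ * ‖x - p‖ := by
  have hsub : closedBall p ‖x - p‖ ⊆ closedBall p ρ :=
    closedBall_subset_closedBall (mem_closedBall_iff_norm.1 hx)
  refine (convex_closedBall p ‖x - p‖).norm_image_sub_le_of_norm_fderiv_le'
    (fun z hz => hf z (hsub hz)) (fun z hz => (hC z (hsub hz)).trans ?_)
    (mem_closedBall_self (norm_nonneg _)) (mem_closedBall_iff_norm.2 le_rfl)
  exact mul_le_mul_of_nonneg_left (mem_closedBall_iff_norm.1 hz) hC0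

end Taylor

section LinearPerturbation

variable {E : Type*} [NormedAddCommGroup E] [NormedSpace ℝ E]

def HasExpDecay (A : E →L[ℝ] E) (K lam : ℝ) : Prop :=
  ∀ t : ℝ, 0 ≤ t → ‖NormedSpace.exp (t • A)‖ ≤ K * Real.exp (-lam * t)

variable {A : E →L[ℝ] E} {K lam : ℝ}

theorem HasExpDecay.nonneg (hA : HasExpDecay A K lam) : 0 ≤ K := by
  simpa using (norm_nonneg _).trans (hA 0 le_rfl)

variable [CompleteSpace E]

theorem eq_exp_smul_add_integral_of_hasDerivAt {y g : ℝ → E} {a b : ℝ}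
    (hab : a ≤ b) (hy : ∀ s ∈ Icc a b, HasDerivAt y (A (y s) + g s) s)
    (hg : ContinuousOn g (Icc a b)) :
    y b = NormedSpace.exp ((b - a) • A) (y a)
      + ∫ s in a..b, NormedSpace.exp ((b - s) • A) (g s) := by
  have hexp : ∀ s, HasDerivAt (fun u : ℝ => NormedSpace.exp ((b - u) • A))
      (-(NormedSpace.exp ((b - s) • A) * A)) s := fun s =>
    ((hasDerivAt_exp_smul_const (𝕂 := ℝ) A (b - s)).scomp s
      ((hasDerivAt_id s).const_sub b)).congr_deriv (by simp)
  have hw : ∀ s ∈ uIcc a b, HasDerivAt (fun u => NormedSpace.exp ((b - u) • A) (y u))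
      (NormedSpace.exp ((b - s) • A) (g s)) s := fun s hs => by
    rw [uIcc_of_le hab] at hs
    convert (hexp s).clm_apply (hy s hs) using 1
    simp
  have hint : IntervalIntegrable (fun s => NormedSpace.exp ((b - s) • A) (g s)) volume a b :=
    ((continuous_iff_continuousAt.2 fun s => (hexp s).continuousAt).continuousOn.clm_apply
      hg).intervalIntegrable_of_Icc hab
  rw [intervalIntegral.integral_eq_sub_of_hasDerivAt hw hint]
  simp

theorem HasExpDecay.exp_mul_norm_le (hA : HasExpDecay A K lam) {y g : ℝ → E} {a b : ℝ}
    (hab : a ≤ b) (hy : ∀ s ∈ Icc a b, HasDerivAt y (A (y s) + g s) s)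
    (hg : ContinuousOn g (Icc a b)) :
    Real.exp (lam * (b - a)) * ‖y b‖
      ≤ K * ‖y a‖ + K * ∫ s in a..b, Real.exp (lam * (s - a)) * ‖g s‖ := by
  have hop : ∀ s ≤ b, ∀ v : E, ‖NormedSpace.exp ((b - s) • A) v‖
      ≤ K * Real.exp (-lam * (b - s)) * ‖v‖ := fun s hs v =>
    (ContinuousLinearMap.le_opNorm _ _).trans
      (mul_le_mul_of_nonneg_right (hA _ (sub_nonneg.2 hs)) (norm_nonneg _))
  have hint : IntervalIntegrable (fun s => K * Real.exp (-lam * (b - s)) * ‖g s‖) volume a b :=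
    ContinuousOn.intervalIntegrable_of_Icc hab (by fun_prop)
  have hduhamel : ‖y b‖ ≤ K * Real.exp (-lam * (b - a)) * ‖y a‖
      + ∫ s in a..b, K * Real.exp (-lam * (b - s)) * ‖g s‖ := by
    rw [eq_exp_smul_add_integral_of_hasDerivAt hab hy hg]
    refine (norm_add_le _ _).trans (add_le_add (hop a hab _) ?_)
    exact intervalIntegral.norm_integral_le_of_norm_le hab
      (ae_of_all _ fun s hs => hop s hs.2 _) hint
  have hweight : ∀ s, Real.exp (lam * (b - a)) * Real.exp (-lam * (b - s))
      = Real.exp (lam * (s - a)) := fun s => by rw [← Real.exp_add]; ring_nf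
  calc Real.exp (lam * (b - a)) * ‖y b‖
      ≤ Real.exp (lam * (b - a)) * (K * Real.exp (-lam * (b - a)) * ‖y a‖
        + ∫ s in a..b, K * Real.exp (-lam * (b - s)) * ‖g s‖) := by gcongr
    _ = K * ‖y a‖ + K * ∫ s in a..b, Real.exp (lam * (s - a)) * ‖g s‖ := by
      rw [mul_add, ← intervalIntegral.integral_const_mul, ← intervalIntegral.integral_const_mul]
      congr 1
      · rw [← mul_assoc, mul_left_comm, hweight, sub_self, mul_zero, Real.exp_zero]; ring
      · congr 1; funext s; rw [← hweight s]; ring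

theorem HasExpDecay.norm_le_mul_exp_of_norm_le_mul (hA : HasExpDecay A K lam) {y g : ℝ → E}
    {a b β : ℝ} (hab : a ≤ b) (hy : ∀ s ∈ Icc a b, HasDerivAt y (A (y s) + g s) s)
    (hg : ContinuousOn g (Icc a b)) (hβ : 0 ≤ β) (hgy : ∀ s ∈ Ico a b, ‖g s‖ ≤ β * ‖y s‖) :
    ‖y b‖ ≤ K * ‖y a‖ * Real.exp ((K * β - lam) * (b - a)) := by
  have hyc : ContinuousOn y (Icc a b) := fun s hs => (hy s hs).continuousAt.continuousWithinAt
  have hz : ∀ s ∈ Icc a b, Real.exp (lam * (s - a)) * ‖y s‖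
      ≤ K * ‖y a‖ + K * β * ∫ u in a..s, Real.exp (lam * (u - a)) * ‖y u‖ := by
    intro s hs
    have hsub : Icc a s ⊆ Icc a b := Icc_subset_Icc_right hs.2
    have hgs := hg.mono hsub
    have hys := hyc.mono hsub
    refine (hA.exp_mul_norm_le hs.1 (fun u hu => hy u (hsub hu)) hgs).trans ?_
    rw [mul_assoc K β, ← intervalIntegral.integral_const_mul β]
    gcongr
    · exact hA.nonneg
    refine intervalIntegral.integral_mono_on_of_le_Ioo hs.1 ?_ ?_ fun u hu => ?_
    · exact ContinuousOn.intervalIntegrable_of_Icc hs.1 (by fun_prop)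
    · exact ContinuousOn.intervalIntegrable_of_Icc hs.1 (by fun_prop)
    · rw [mul_left_comm]
      gcongr
      exact hgy u ⟨hu.1.le, hu.2.trans_le hs.2⟩
  have hgron := le_mul_exp_of_le_add_mul_integral hab (by fun_prop)
    (mul_nonneg hA.nonneg hβ) hz
  rw [← le_div_iff₀' (Real.exp_pos _)] at hgron
  refine hgron.trans_eq ?_
  rw [mul_div_assoc, ← Real.exp_sub]
  ring_nf

theorem HasExpDecay.norm_le_mul_exp_of_norm_lt_imp (hA : HasExpDecay A K lam) {y g : ℝ → E}
    {a β ε : ℝ} (hy : ∀ s, a ≤ s → HasDerivAt y (A (y s) + g s) s) (hg : ContinuousOn g (Ici a))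
    (hβ : 0 ≤ β) (hβlam : K * β ≤ lam) (hgy : ∀ s, a ≤ s → ‖y s‖ < ε → ‖g s‖ ≤ β * ‖y s‖)
    (hya : K * ‖y a‖ < ε) {t : ℝ} (ht : a ≤ t) :
    ‖y t‖ ≤ K * ‖y a‖ * Real.exp ((K * β - lam) * (t - a)) := by
  have hdecay : ∀ b, a ≤ b → (∀ s ∈ Ico a b, ‖y s‖ < ε) →
      ‖y b‖ ≤ K * ‖y a‖ * Real.exp ((K * β - lam) * (b - a)) := fun b hab hsmall =>
    hA.norm_le_mul_exp_of_norm_le_mul hab (fun s hs => hy s hs.1) (hg.mono Icc_subset_Ici_self)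
      hβ fun s hs => hgy s hs.1 (hsmall s hs)
  have hsmall : ∀ s, a ≤ s → ‖y s‖ < ε := by
    intro b hab
    by_contra! hbig
    have hyc : ContinuousOn y (Icc a b) := fun s hs => (hy s hs.1).continuousAt.continuousWithinAt
    have hB : IsCompact {s ∈ Icc a b | ε ≤ ‖y s‖} :=
      isCompact_Icc.of_isClosed_subset
        (hyc.norm.preimage_isClosed_of_isClosed isClosed_Icc isClosed_Ici) (sep_subset _ _)
    obtain ⟨τ, ⟨⟨haτ, hτb⟩, hετ⟩, hτmin⟩ := hB.exists_isLeast ⟨b, ⟨hab, le_rfl⟩, hbig⟩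
    have hbefore : ∀ s ∈ Ico a τ, ‖y s‖ < ε := fun s hs =>
      lt_of_not_ge fun hεs => hs.2.not_ge (hτmin ⟨⟨hs.1, hs.2.le.trans hτb⟩, hεs⟩)
    have hexp_le : Real.exp ((K * β - lam) * (τ - a)) ≤ 1 :=
      Real.exp_le_one_iff.2 (mul_nonpos_of_nonpos_of_nonneg (by linarith) (by linarith))
    have hτ : ‖y τ‖ < ε := ((hdecay τ haτ hbefore).trans
      (mul_le_of_le_one_right (by positivity [hA.nonneg]) hexp_le)).trans_lt hya
    exact hτ.not_ge hετ
  exact hdecay t ht fun s hs => hsmall s hs.1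

theorem HasExpDecay.norm_sub_le_mul_exp_of_hasDerivAt (hA : HasExpDecay A K lam) {f : E → E}
    {p : E} {u : ℝ → E} {a β ε : ℝ} (hf : Continuous f) (hβ : 0 ≤ β) (hβlam : K * β ≤ lam)
    (hfA : ∀ x, ‖x - p‖ < ε → ‖f x - A (x - p)‖ ≤ β * ‖x - p‖)
    (hu : ∀ s, a ≤ s → HasDerivAt u (f (u s)) s) (hua : K * ‖u a - p‖ < ε) {t : ℝ} (ht : a ≤ t) :
    ‖u t - p‖ ≤ K * ‖u a - p‖ * Real.exp ((K * β - lam) * (t - a)) := by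
  have huc : ContinuousOn u (Ici a) := fun s hs => (hu s hs).continuousAt.continuousWithinAt
  refine hA.norm_le_mul_exp_of_norm_lt_imp (g := fun s => f (u s) - A (u s - p))
    (fun s hs => ?_) (by fun_prop) hβ hβlam (fun s _ => hfA (u s)) hua ht
  exact ((hu s hs).sub_const p).congr_deriv (by abel)

theorem HasExpDecay.exists_norm_fderiv_sub_le_mul_exp {f : E → E} {p : E} (hf : ContDiff ℝ 2 f)
    (hfp : f p = 0) (hA : HasExpDecay (fderiv ℝ f p) K lam) (hK : 0 < K) (hlam : 0 < lam) :
    ∃ δ c μ : ℝ, 0 < δ ∧ 0 ≤ c ∧ 0 < μ ∧ ∀ (u : ℝ → E) (a : ℝ),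
      (∀ s, a ≤ s → HasDerivAt u (f (u s)) s) → ‖u a - p‖ < δ →
      ∀ s, a ≤ s → ‖fderiv ℝ f (u s) - fderiv ℝ f p‖ ≤ c * Real.exp (-μ * (s - a)) := by
  obtain ⟨C, ρ, hC, hρ, hDf⟩ := hf.exists_norm_fderiv_sub_le p
  set ε := min ρ (lam / (K * C + 1))
  have hε : 0 < ε := lt_min hρ (by positivity)
  have hερ : ε ≤ ρ := min_le_left _ _
  have hεlam : K * (C * ε) < lam := by
    have : (K * C + 1) * ε ≤ lam := (le_div_iff₀' (by positivity)).1 (min_le_right _ _)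
    nlinarith
  set μ := lam - K * (C * ε)
  refine ⟨ε / K, C * ε, μ, by positivity, by positivity, sub_pos.2 hεlam,
    fun u a hu hua s hs => ?_⟩
  have hlin : ∀ x, ‖x - p‖ < ε → ‖f x - fderiv ℝ f p (x - p)‖ ≤ C * ε * ‖x - p‖ := fun x hx =>
    calc ‖f x - fderiv ℝ f p (x - p)‖ ≤ C * ‖x - p‖ * ‖x - p‖ := by
          simpa [hfp] using norm_sub_sub_fderiv_apply_le
            (fun x _ => (hf.differentiable two_ne_zero).differentiableAt) hC hDf
            (mem_closedBall_iff_norm.2 (hx.le.trans hερ))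
      _ ≤ C * ε * ‖x - p‖ := by gcongr
  have hdecay : ‖u s - p‖ ≤ ε * Real.exp (-μ * (s - a)) := calc
    ‖u s - p‖ ≤ K * ‖u a - p‖ * Real.exp ((K * (C * ε) - lam) * (s - a)) :=
        hA.norm_sub_le_mul_exp_of_hasDerivAt hf.continuous (by positivity) hεlam.le hlin hu
          ((lt_div_iff₀' hK).1 hua) hs
    _ ≤ ε * Real.exp (-μ * (s - a)) := by
        rw [show K * (C * ε) - lam = -μ by ring]
        gcongr
        exact ((lt_div_iff₀' hK).1 hua).le
  have hexp_le : Real.exp (-μ * (s - a)) ≤ 1 :=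
    Real.exp_le_one_iff.2 (mul_nonpos_of_nonpos_of_nonneg (by linarith) (by linarith))
  have hball : u s ∈ closedBall p ρ := mem_closedBall_iff_norm.2
    ((hdecay.trans (mul_le_of_le_one_right hε.le hexp_le)).trans hερ)
  rw [mul_assoc]
  exact (hDf _ hball).trans (by gcongr)

end LinearPerturbation

theorem exists_uniform_hitting_time {X : Type*} [TopologicalSpace X] {S N : Set X}
    (hS : IsCompact S) (hN : IsOpen N) {V W : X → ℝ} {r : ℝ} (hW : ContinuousOn W S)
    (hWneg : ∀ x ∈ S \ N, W x < 0) (hVr : ∀ x ∈ S, V x ≤ r) (hV0 : ∀ x ∈ S \ N, 0 ≤ V x)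
    {φ : ℝ → X → X} (hφS : ∀ u ∈ S, ∀ t, 0 ≤ t → φ t u ∈ S)
    (hVφ : ∀ u ∈ S, ∀ t, 0 ≤ t → HasDerivAt (fun τ => V (φ τ u)) (W (φ t u)) t) :
    ∃ T, 0 ≤ T ∧ ∀ u ∈ S, ∃ t ∈ Icc 0 T, φ t u ∈ N := by
  rcases (S \ N).eq_empty_or_nonempty with hempty | hne
  · refine ⟨0, le_rfl, fun u hu => ⟨0, left_mem_Icc.2 le_rfl, ?_⟩⟩
    by_contra hu0
    exact hempty.subset ⟨hφS u hu 0 le_rfl, hu0⟩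
  obtain ⟨x₀, hx₀, hmax⟩ := (hS.diff hN).exists_isMaxOn hne (hW.mono sdiff_subset)
  have hm : 0 < -W x₀ := neg_pos.2 (hWneg x₀ hx₀)
  obtain ⟨n, hn⟩ := exists_nat_gt (r / -W x₀)
  refine ⟨n, n.cast_nonneg, fun u hu => ?_⟩
  by_contra! hout
  have hmem : ∀ t ∈ Icc (0 : ℝ) n, φ t u ∈ S \ N := fun t ht => ⟨hφS u hu t ht.1, hout t ht⟩
  have hdrop : V (φ n u) - V (φ 0 u) ≤ W x₀ * (n - 0) :=
    (convex_Icc 0 (n : ℝ)).image_sub_le_mul_sub_of_deriv_le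
      (fun t ht => (hVφ u hu t ht.1).continuousAt.continuousWithinAt)
      (fun t ht => (hVφ u hu t (interior_subset ht).1).differentiableAt.differentiableWithinAt)
      (fun t ht => (hVφ u hu t (interior_subset ht).1).deriv ▸ hmax (hmem t (interior_subset ht)))
      0 (left_mem_Icc.2 n.cast_nonneg) n (right_mem_Icc.2 n.cast_nonneg) n.cast_nonneg
  have h0 := hVr _ (hφS u hu 0 le_rfl)
  have hn0 := hV0 _ (hmem n (right_mem_Icc.2 n.cast_nonneg))
  rw [div_lt_iff₀ hm] at hn
  linarith

theorem integral_exp_neg_mul_sub_le {μ : ℝ} (hμ : 0 < μ) (a b : ℝ) :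
    ∫ s in a..b, Real.exp (-μ * (s - a)) ≤ 1 / μ := by
  have hderiv : ∀ s ∈ uIcc a b, HasDerivAt (fun s => -Real.exp (-μ * (s - a)) / μ)
      (Real.exp (-μ * (s - a))) s := fun s _ => by
    have := (((hasDerivAt_id s).sub_const a).const_mul (-μ)).exp.neg.div_const μ
    exact this.congr_deriv (by field_simp; rfl)
  rw [intervalIntegral.integral_eq_sub_of_hasDerivAt hderiv
    (Continuous.intervalIntegrable (by fun_prop) _ _)]
  have := Real.exp_pos (-μ * (b - a))
  rw [sub_self, mul_zero, Real.exp_zero, div_sub_div_same]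
  gcongr
  linarith

theorem integral_le_of_le_of_le_mul_exp {F : ℝ → ℝ} {M c μ t₀ t : ℝ} (hF : ContinuousOn F (Ici 0))
    (hF0 : ∀ s, 0 ≤ F s) (hμ : 0 < μ) (ht₀ : 0 ≤ t₀) (hM : ∀ s ∈ Icc 0 t₀, F s ≤ M)
    (hc : ∀ s, t₀ ≤ s → F s ≤ c * Real.exp (-μ * (s - t₀))) (ht : 0 ≤ t) :
    ∫ s in (0 : ℝ)..t, F s ≤ M * t₀ + c / μ := by
  have hint : ∀ a b, 0 ≤ a → a ≤ b → IntervalIntegrable F volume a b := fun a b ha hab =>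
    (hF.mono fun s hs => ha.trans hs.1).intervalIntegrable_of_Icc hab
  have hc0 : 0 ≤ c := by simpa using (hF0 t₀).trans (hc t₀ le_rfl)
  set b := max t t₀
  have hhead : ∫ s in (0 : ℝ)..t₀, F s ≤ M * t₀ := by
    simpa [mul_comm] using intervalIntegral.integral_mono_on ht₀ (hint 0 t₀ le_rfl ht₀)
      intervalIntegrable_const hM
  have htail : ∫ s in t₀..b, F s ≤ c / μ := calc
    ∫ s in t₀..b, F s ≤ ∫ s in t₀..b, c * Real.exp (-μ * (s - t₀)) :=
      intervalIntegral.integral_mono_on (le_max_right _ _) (hint t₀ b ht₀ (le_max_right _ _))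
        (Continuous.intervalIntegrable (by fun_prop) _ _) fun s hs => hc s hs.1
    _ ≤ c * (1 / μ) := by
      rw [intervalIntegral.integral_const_mul]
      exact mul_le_mul_of_nonneg_left (integral_exp_neg_mul_sub_le hμ t₀ b) hc0
    _ = c / μ := mul_one_div c μ
  calc ∫ s in (0 : ℝ)..t, F s ≤ ∫ s in (0 : ℝ)..b, F s :=
        intervalIntegral.integral_mono_interval le_rfl ht (le_max_left _ _)
          (ae_of_all _ hF0) (hint 0 b le_rfl (ht.trans (le_max_left _ _)))
    _ = (∫ s in (0 : ℝ)..t₀, F s) + ∫ s in t₀..b, F s :=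
        (intervalIntegral.integral_add_adjacent_intervals (hint 0 t₀ le_rfl ht₀)
          (hint t₀ b ht₀ (le_max_right _ _))).symm
    _ ≤ M * t₀ + c / μ := add_le_add hhead htail

theorem stmt12_general {d : ℕ}
    (h : EuclideanSpace ℝ (Fin d) → EuclideanSpace ℝ (Fin d))
    (hh : ContDiff ℝ 2 h)
    (xstar : EuclideanSpace ℝ (Fin d)) (hzero : h xstar = 0)
    (Ktil lam' : ℝ) (hK : 1 ≤ Ktil) (hlam' : 0 < lam')
    (hexp : ∀ t : ℝ, 0 ≤ t →
      ‖NormedSpace.exp (t • fderiv ℝ h xstar)‖ ≤ Ktil * Real.exp (-lam' * t))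
    (U : Set (EuclideanSpace ℝ (Fin d))) (hU : IsOpen U)
    (V : EuclideanSpace ℝ (Fin d) → ℝ) (hV : ContDiffOn ℝ 1 V U)
    (hVpos : ∀ x ∈ U, x ≠ xstar →
      0 < V x ∧ (inner ℝ (gradient V x) (h x) : ℝ) < 0)
    (r : ℝ)
    (hcompact : IsCompact {x ∈ U | V x ≤ r})
    (φ : ℝ → EuclideanSpace ℝ (Fin d) → EuclideanSpace ℝ (Fin d))
    (hφd : ∀ u ∈ {x ∈ U | V x ≤ r}, ∀ t : ℝ, 0 ≤ t →
      HasDerivAt (fun τ => φ τ u) (h (φ t u)) t)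
    (hφin : ∀ u ∈ {x ∈ U | V x ≤ r}, ∀ t : ℝ, 0 ≤ t → φ t u ∈ {x ∈ U | V x ≤ r}) :
    ∃ K₂ : ℝ, 0 ≤ K₂ ∧
      ∀ u₀ ∈ {x ∈ U | V x ≤ r}, ∀ t : ℝ, 0 ≤ t →
        (∫ τ in (0 : ℝ)..t, ‖fderiv ℝ h (φ τ u₀) - fderiv ℝ h xstar‖) ≤ K₂ := by
  set S := {x ∈ U | V x ≤ r}
  obtain ⟨δ, c, μ, hδ, hc, hμ, hdecay⟩ :=
    HasExpDecay.exists_norm_fderiv_sub_le_mul_exp hh hzero hexp (one_pos.trans_le hK) hlam'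
  have hne : ∀ x ∈ S \ ball xstar δ, x ≠ xstar := fun x hx hx' => hx.2 (hx' ▸ mem_ball_self hδ)
  obtain ⟨T, hT, hhit⟩ := exists_uniform_hitting_time hcompact isOpen_ball
    (((hV.continuousOn_fderiv_of_isOpen hU le_rfl).clm_apply hh.continuous.continuousOn).mono
      (sep_subset _ _))
    (fun x hx => by
      rw [← toDual_gradient]
      exact (hVpos x hx.1.1 (hne x hx)).2)
    (fun x hx => hx.2) (fun x hx => (hVpos x hx.1.1 (hne x hx)).1.le) hφin
    (fun u hu t ht => ((hV.differentiableOn one_ne_zero).differentiableAt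
      (hU.mem_nhds (hφin u hu t ht).1)).hasFDerivAt.comp_hasDerivAt t (hφd u hu t ht))
  have hDhc : Continuous (fderiv ℝ h) := hh.continuous_fderiv two_ne_zero
  obtain ⟨M, hM⟩ : ∃ M, ∀ x ∈ S, ‖fderiv ℝ h x - fderiv ℝ h xstar‖ ≤ M :=
    hcompact.exists_bound_of_continuousOn (hDhc.sub continuous_const).continuousOn
  refine ⟨max M 0 * T + c / μ, by positivity, fun u₀ hu₀ t ht => ?_⟩
  obtain ⟨t₀, ⟨ht₀, ht₀T⟩, hu₀t₀⟩ := hhit u₀ hu₀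
  have hF : ContinuousOn (fun τ => ‖fderiv ℝ h (φ τ u₀) - fderiv ℝ h xstar‖) (Ici 0) :=
    ((hDhc.comp_continuousOn fun s hs => (hφd u₀ hu₀ s hs).continuousAt.continuousWithinAt).sub
      continuousOn_const).norm
  calc _ ≤ max M 0 * t₀ + c / μ :=
        integral_le_of_le_of_le_mul_exp hF (fun _ => norm_nonneg _) hμ ht₀
          (fun s hs => (hM _ (hφin u₀ hu₀ s hs.1)).trans (le_max_left _ _))
          (hdecay (φ · u₀) t₀ (fun s hs => hφd u₀ hu₀ s (ht₀.trans hs))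
            (mem_ball_iff_norm.1 hu₀t₀)) ht
    _ ≤ max M 0 * T + c / μ := by gcongr

/-- Integrated Jacobian deviation bound along the semiflow on a compact sublevel set of
a Liapunov function near an equilibrium x* of ẋ = h(x) (Lemma "BoundDh"):
∃ K₂ ≥ 0 such that ∫₀^t ‖Dh(φ(τ,u₀)) − Dh(x*)‖ dτ ≤ K₂ for all u₀ in the sublevel set
V^r and all t ≥ 0. -/
theorem stmt12 {d : ℕ}
    (h : EuclideanSpace ℝ (Fin d) → EuclideanSpace ℝ (Fin d))
    (hh : ContDiff ℝ 2 h)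
    (xstar : EuclideanSpace ℝ (Fin d)) (hzero : h xstar = 0)
    (Ktil lam' : ℝ) (hK : 1 ≤ Ktil) (hlam' : 0 < lam')
    (hexp : ∀ t : ℝ, 0 ≤ t →
      ‖NormedSpace.exp (t • fderiv ℝ h xstar)‖ ≤ Ktil * Real.exp (-lam' * t))
    (κ : ℝ) (hκ : κ ∈ Set.Ioo (0 : ℝ) 1)
    (lam : ℝ) (hlamdef : lam = ((1 - κ) / Ktil ^ 2) * lam')
    (U : Set (EuclideanSpace ℝ (Fin d))) (hU : IsOpen U) (hxU : xstar ∈ U)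
    (V : EuclideanSpace ℝ (Fin d) → ℝ) (hV : ContDiffOn ℝ 1 V U)
    (hVzero : V xstar = 0)
    (hVpos : ∀ x ∈ U, x ≠ xstar →
      0 < V x ∧ (inner ℝ (gradient V x) (h x) : ℝ) < 0)
    (r : ℝ) (hr : 0 < r)
    (hcompact : IsCompact {x ∈ U | V x ≤ r})
    (φ : ℝ → EuclideanSpace ℝ (Fin d) → EuclideanSpace ℝ (Fin d))
    (hφ0 : ∀ u ∈ {x ∈ U | V x ≤ r}, φ 0 u = u)
    (hφd : ∀ u ∈ {x ∈ U | V x ≤ r}, ∀ t : ℝ, 0 ≤ t →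
      HasDerivAt (fun τ => φ τ u) (h (φ t u)) t)
    (hφin : ∀ u ∈ {x ∈ U | V x ≤ r}, ∀ t : ℝ, 0 ≤ t → φ t u ∈ {x ∈ U | V x ≤ r}) :
    ∃ K₂ : ℝ, 0 ≤ K₂ ∧
      ∀ u₀ ∈ {x ∈ U | V x ≤ r}, ∀ t : ℝ, 0 ≤ t →
        (∫ τ in (0 : ℝ)..t, ‖fderiv ℝ h (φ τ u₀) - fderiv ℝ h xstar‖) ≤ K₂ :=
  stmt12_general h hh xstar hzero Ktil lam' hK hlam' hexp U hU V hV hVpos r hcompact φ hφd hφin
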